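/- Let α ∈ ℝ and let u, w : ℝ² → ℝ be smooth functions of (x,y) satisfying the hydrodynamic-type system ∂_y w = ∂_x( w²/2 + u ) − α u ∂_x w and ∂_y u = ∂_x( w u ) − α u ∂_x u everywhere. Then for every (x,y) ∈ ℝ² and every p ∈ ℝ with p ≠ w(x,y), the rational function L(x,y,p) = p + u(x,y)/(p − w(x,y)) satisfies the y-flow Lax equation of the interpolating-system hierarchy: ∂_y L = (p − α u) ∂_x L − (∂_x u) ∂_p L. -/

import Mathlib

/-- Partial derivative in `x` of a function on `ℝ² = (x,y)`. -/
noncomputable def pdx (f : ℝ × ℝ → ℝ) (q : ℝ × ℝ) : ℝ :=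
  deriv (fun s => f (s, q.2)) q.1

/-- Partial derivative in `y` of a function on `ℝ² = (x,y)`. -/
noncomputable def pdy (f : ℝ × ℝ → ℝ) (q : ℝ × ℝ) : ℝ :=
  deriv (fun s => f (q.1, s)) q.2

/-- Partial derivative in `x` of a function on `ℝ³ = (x,y,p)`. -/
noncomputable def pd3x (f : ℝ × ℝ × ℝ → ℝ) (r : ℝ × ℝ × ℝ) : ℝ :=
  deriv (fun s => f (s, r.2.1, r.2.2)) r.1

/-- Partial derivative in `y` of a function on `ℝ³ = (x,y,p)`. -/
noncomputable def pd3y (f : ℝ × ℝ × ℝ → ℝ) (r : ℝ × ℝ × ℝ) : ℝ :=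
  deriv (fun s => f (r.1, s, r.2.2)) r.2.1

/-- Partial derivative in the spectral variable `p` of a function on `ℝ³ = (x,y,p)`. -/
noncomputable def pd3p (f : ℝ × ℝ × ℝ → ℝ) (r : ℝ × ℝ × ℝ) : ℝ :=
  deriv (fun s => f (r.1, r.2.1, s)) r.2.2

/-- The Zakharov-type rational Lax function `L(x,y,p) = p + u(x,y)/(p − w(x,y))`. -/
noncomputable def zakharovL (u w : ℝ × ℝ → ℝ) (r : ℝ × ℝ × ℝ) : ℝ :=
  r.2.2 + u (r.1, r.2.1) / (r.2.2 - w (r.1, r.2.1))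

/-! Each partial derivative of `L = p + u/(p − w)` is a rational expression in `u`, `w` and their
first derivatives with denominator `(p − w)²`. Substituting the system for `u_y` and `w_y`, the
Lax equation becomes a polynomial identity after clearing that denominator. -/

section PartialDerivatives

variable {f g : ℝ × ℝ → ℝ} {q : ℝ × ℝ}

theorem hasDerivAt_pdx (hf : DifferentiableAt ℝ f q) :
    HasDerivAt (fun s => f (s, q.2)) (pdx f q) q.1 :=
  (hf.comp q.1 (differentiableAt_id.prodMk (differentiableAt_const q.2))).hasDerivAt

theorem hasDerivAt_pdy (hf : DifferentiableAt ℝ f q) :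
    HasDerivAt (fun s => f (q.1, s)) (pdy f q) q.2 :=
  (hf.comp q.2 ((differentiableAt_const q.1).prodMk differentiableAt_id)).hasDerivAt

theorem pdx_sq_div_two_add (hf : DifferentiableAt ℝ f q) (hg : DifferentiableAt ℝ g q) :
    pdx (fun s => f s ^ 2 / 2 + g s) q = f q * pdx f q + pdx g q := by
  have h : HasDerivAt (fun s => f (s, q.2) ^ 2 / 2 + g (s, q.2))
      (f q * pdx f q + pdx g q) q.1 := by
    refine (((hasDerivAt_pdx hf).pow 2).div_const 2 |>.add (hasDerivAt_pdx hg)).congr_deriv ?_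
    simp only [Prod.mk.eta]
    ring
  exact h.deriv

theorem pdx_mul (hf : DifferentiableAt ℝ f q) (hg : DifferentiableAt ℝ g q) :
    pdx (fun s => f s * g s) q = pdx f q * g q + f q * pdx g q :=
  ((hasDerivAt_pdx hf).mul (hasDerivAt_pdx hg)).deriv

end PartialDerivatives

theorem HasDerivAt.const_add_div_const_sub {a b : ℝ → ℝ} {a' b' p t : ℝ}
    (ha : HasDerivAt a a' t) (hb : HasDerivAt b b' t) (hp : p ≠ b t) :
    HasDerivAt (fun s => p + a s / (p - b s))
      ((a' * (p - b t) + a t * b') / (p - b t) ^ 2) t := by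
  refine ((ha.div ((hasDerivAt_const t p).sub hb) (sub_ne_zero.mpr hp)).const_add p).congr_deriv
    ?_
  simp only [Pi.sub_apply]
  ring

section ZakharovPartials

variable {u w : ℝ × ℝ → ℝ} {q : ℝ × ℝ} {p : ℝ}

theorem pd3x_zakharovL (hu : DifferentiableAt ℝ u q) (hw : DifferentiableAt ℝ w q)
    (hp : p ≠ w q) :
    pd3x (zakharovL u w) (q.1, q.2, p)
      = (pdx u q * (p - w q) + u q * pdx w q) / (p - w q) ^ 2 :=
  ((hasDerivAt_pdx hu).const_add_div_const_sub (hasDerivAt_pdx hw) hp).deriv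

theorem pd3y_zakharovL (hu : DifferentiableAt ℝ u q) (hw : DifferentiableAt ℝ w q)
    (hp : p ≠ w q) :
    pd3y (zakharovL u w) (q.1, q.2, p)
      = (pdy u q * (p - w q) + u q * pdy w q) / (p - w q) ^ 2 :=
  ((hasDerivAt_pdy hu).const_add_div_const_sub (hasDerivAt_pdy hw) hp).deriv

theorem pd3p_zakharovL (hp : p ≠ w q) :
    pd3p (zakharovL u w) (q.1, q.2, p) = 1 - u q / (p - w q) ^ 2 := by
  have h : HasDerivAt (fun s => s + u q / (s - w q)) (1 - u q / (p - w q) ^ 2) p := by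
    refine ((hasDerivAt_id p).add ((hasDerivAt_const p (u q)).div
      ((hasDerivAt_id p).sub_const (w q)) (sub_ne_zero.mpr hp))).congr_deriv ?_
    simp only [id]
    ring
  exact h.deriv

end ZakharovPartials

/-- If `u`, `w` satisfy the hydrodynamic-type system
`∂_y w = ∂_x(w²/2 + u) − α u ∂_x w`, `∂_y u = ∂_x(w u) − α u ∂_x u`, then the rational
Lax function `L = p + u/(p − w)` satisfies the `y`-flow Lax equation of the
interpolating-system hierarchy `∂_y L = (p − α u)∂_x L − u_x ∂_p L` wherever `p ≠ w`. -/
theorem zakharov_y_flow (α : ℝ) (u w : ℝ × ℝ → ℝ)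
    (hu : ContDiff ℝ (⊤ : ℕ∞) u) (hw : ContDiff ℝ (⊤ : ℕ∞) w)
    (h1 : ∀ q : ℝ × ℝ,
      pdy w q = pdx (fun s => (w s) ^ 2 / 2 + u s) q - α * u q * pdx w q)
    (h2 : ∀ q : ℝ × ℝ,
      pdy u q = pdx (fun s => w s * u s) q - α * u q * pdx u q) :
    ∀ q : ℝ × ℝ, ∀ p : ℝ, p ≠ w q →
      pd3y (zakharovL u w) (q.1, q.2, p)
        = (p - α * u q) * pd3x (zakharovL u w) (q.1, q.2, p)
          - pdx u q * pd3p (zakharovL u w) (q.1, q.2, p) := by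
  intro q p hp
  have hu' := (hu.differentiable (by simp)) q
  have hw' := (hw.differentiable (by simp)) q
  have hden : p - w q ≠ 0 := sub_ne_zero.mpr hp
  rw [pd3y_zakharovL hu' hw' hp, pd3x_zakharovL hu' hw' hp, pd3p_zakharovL hp, h1, h2,
    pdx_sq_div_two_add hw' hu', pdx_mul hw' hu']
  field_simp
  ring
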